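/- arXiv:2408.17067 — 12 statements merged into one kernel-verified Lean document; each statement's English description precedes it below -/
import Mathlib

section
/- If a choice function C on subsets of a finite set E satisfies consistency (Z ⊇ Z' ⊇ C(Z) implies C(Z') = C(Z)) and substitutability (Z ⊇ Z' implies C(Z) ∩ Z' ⊆ C(Z')), and C(Z) ⊆ Z for all Z, then C is path independent: for all Z, Z' ⊆ E, C(Z ∪ Z') = C(C(Z) ∪ Z'). -/
theorem stmt0 {E : Type*} [DecidableEq E] [Fintype E] (C : Finset E → Finset E)
    (hsub : ∀ Z, C Z ⊆ Z)
    (hA1 : ∀ Z Z', Z' ⊆ Z → C Z ⊆ Z' → C Z' = C Z)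
    (hA2 : ∀ Z Z', Z' ⊆ Z → C Z ∩ Z' ⊆ C Z') :
    ∀ Z Z', C (Z ∪ Z') = C (C Z ∪ Z') := by
  intro Z Z'
  have hB : C Z ∪ Z' ⊆ Z ∪ Z' :=
    Finset.union_subset_union (hsub Z) (le_refl Z')
  have hCA : C (Z ∪ Z') ⊆ C Z ∪ Z' := by
    intro x hx
    rcases Finset.mem_union.mp (hsub _ hx) with h | h
    · exact Finset.mem_union_left _ (hA2 (Z ∪ Z') Z Finset.subset_union_left
        (Finset.mem_inter.mpr ⟨hx, h⟩))
    · exact Finset.mem_union_right _ h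
  exact (hA1 (Z ∪ Z') (C Z ∪ Z') hB hCA).symm
end

section
/- If a choice function C on subsets of a finite set E is path independent (C(Z ∪ Z') = C(C(Z) ∪ Z') for all Z, Z') and satisfies C(Z) ⊆ Z for all Z, then C satisfies both consistency (Z ⊇ Z' ⊇ C(Z) implies C(Z') = C(Z)) and substitutability (Z ⊇ Z' implies C(Z) ∩ Z' ⊆ C(Z')). -/
theorem stmt1 {E : Type*} [DecidableEq E] [Fintype E] (C : Finset E → Finset E)
    (hsub : ∀ Z, C Z ⊆ Z)
    (hPI : ∀ Z Z', C (Z ∪ Z') = C (C Z ∪ Z')) :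
    (∀ Z Z', Z' ⊆ Z → C Z ⊆ Z' → C Z' = C Z) ∧
    (∀ Z Z', Z' ⊆ Z → C Z ∩ Z' ⊆ C Z') := by
  constructor
  · intro Z Z' hZZ hCZ
    have h1 : Z ∪ Z' = Z := Finset.union_eq_left.mpr hZZ
    have h2 : C Z ∪ Z' = Z' := Finset.union_eq_right.mpr hCZ
    have := hPI Z Z'
    rw [h1, h2] at this
    exact this.symm
  · intro Z Z' hZZ x hx
    simp only [Finset.mem_inter] at hx
    have h1 : Z' ∪ (Z \ Z') = Z := Finset.union_sdiff_of_subset hZZ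
    have := hPI Z' (Z \ Z')
    rw [h1] at this
    have hx2 : x ∈ C (C Z' ∪ (Z \ Z')) := this ▸ hx.1
    have := hsub _ hx2
    rcases Finset.mem_union.mp this with h | h
    · exact h
    · exact absurd (Finset.mem_sdiff.mp h).2 (not_not.mpr hx.2)
end

section
/- Let C be a choice function satisfying consistency, substitutability, and cardinal monotonicity, let Z be acceptable (C(Z) = Z), and let e ∉ Z. Then e ∈ C(Z ∪ {e}) if and only if C(Z ∪ {e}) equals either Z ∪ {e} or (Z \ {e'}) ∪ {e} for some e' ∈ Z. -/
theorem stmt4 {E : Type*} [DecidableEq E] [Fintype E] (C : Finset E → Finset E)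
    (hsub : ∀ Z, C Z ⊆ Z)
    (hA1 : ∀ Z Z', Z' ⊆ Z → C Z ⊆ Z' → C Z' = C Z)
    (hA2 : ∀ Z Z', Z' ⊆ Z → C Z ∩ Z' ⊆ C Z')
    (hA3 : ∀ Z Z', Z' ⊆ Z → (C Z').card ≤ (C Z).card)
    (Z : Finset E) (hZ : C Z = Z) (e : E) (he : e ∉ Z) :
    e ∈ C (Z ∪ {e}) ↔
      (C (Z ∪ {e}) = Z ∪ {e} ∨ ∃ e' ∈ Z, C (Z ∪ {e}) = (Z \ {e'}) ∪ {e}) := by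
  constructor
  · intro heC
    set W := Z ∪ {e} with hW
    have hZW : Z ⊆ W := Finset.subset_union_left
    have hcard : Z.card ≤ (C W).card := by
      have := hA3 W Z hZW; rwa [hZ] at this
    have hCW : C W ⊆ W := hsub W
    have hWcard : W.card = Z.card + 1 := by
      rw [hW, Finset.card_union_of_disjoint (Finset.disjoint_singleton_right.2 he),
        Finset.card_singleton]
    by_cases h : C W = W
    · left; exact h
    · right
      have hlt : (C W).card < W.card :=
        Finset.card_lt_card (hCW.ssubset_of_ne h)
      have hcard2 : (C W).card = Z.card := by omega
      set S := C W \ {e} with hS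
      have hS_sub : S ⊆ Z := by
        intro x hx
        rw [hS, Finset.mem_sdiff, Finset.mem_singleton] at hx
        rcases Finset.mem_union.1 (hCW hx.1) with h' | h'
        · exact h'
        · exact absurd (Finset.mem_singleton.1 h') hx.2
      have hpos : 1 ≤ (C W).card := Finset.card_pos.2 ⟨e, heC⟩
      have hS_card : S.card = Z.card - 1 := by
        rw [hS, Finset.card_sdiff_of_subset (Finset.singleton_subset_iff.2 heC),
          Finset.card_singleton, hcard2]
      have hZS : (Z \ S).card = 1 := by
        rw [Finset.card_sdiff_of_subset hS_sub, hS_card]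
        omega
      obtain ⟨e', he'⟩ := Finset.card_eq_one.1 hZS
      have he'Z : e' ∈ Z := by
        have : e' ∈ Z \ S := he' ▸ Finset.mem_singleton_self e'
        exact (Finset.mem_sdiff.1 this).1
      refine ⟨e', he'Z, ?_⟩
      have hZe' : Z \ {e'} = S := by
        rw [← he', Finset.sdiff_sdiff_self_left,
          Finset.inter_eq_right.2 hS_sub]
      rw [hZe', hS]
      ext x
      simp only [Finset.mem_union, Finset.mem_sdiff, Finset.mem_singleton]
      constructor
      · intro hx
        by_cases hxe : x = e
        · exact Or.inr hxe
        · exact Or.inl ⟨hx, hxe⟩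
      · rintro (⟨hx, _⟩ | rfl)
        · exact hx
        · exact heC
  · rintro (h | ⟨e', _, h⟩) <;> rw [h] <;> simp
end

section
/- Let C be a choice function satisfying consistency, substitutability, and cardinal monotonicity, let Z be acceptable (C(Z) = Z), and let e ∉ Z. If e is interesting under Z (e ∈ C(Z ∪ {e})), then Z' := C(Z ∪ {e}) satisfies Z' ≻ Z, i.e., C(Z' ∪ Z) = Z' and Z' ≠ Z. -/
theorem stmt5 {E : Type*} [DecidableEq E] [Fintype E] (C : Finset E → Finset E)
    (hsub : ∀ Z, C Z ⊆ Z)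
    (hA1 : ∀ Z Z', Z' ⊆ Z → C Z ⊆ Z' → C Z' = C Z)
    (hA2 : ∀ Z Z', Z' ⊆ Z → C Z ∩ Z' ⊆ C Z')
    (hA3 : ∀ Z Z', Z' ⊆ Z → (C Z').card ≤ (C Z).card)
    (Z : Finset E) (hZ : C Z = Z) (e : E) (he : e ∉ Z)
    (hint : e ∈ C (Z ∪ {e})) :
    C (C (Z ∪ {e}) ∪ Z) = C (Z ∪ {e}) ∧ C (Z ∪ {e}) ≠ Z := by
  constructor
  · exact hA1 (Z ∪ {e}) (C (Z ∪ {e}) ∪ Z)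
      (Finset.union_subset (hsub _) (Finset.subset_union_left))
      (Finset.subset_union_left)
  · intro h
    rw [h] at hint
    exact he hint
end

section
/- Let C satisfy consistency, substitutability and cardinal monotonicity, let X be acceptable (C(X) = X), and let (a(1), b(1)), ..., (a(k), b(k)) be pairs with all a(i) ∉ X distinct, all b(i) ∈ X distinct, and C(X ∪ {a(i)}) = (X ∪ {a(i)}) \ {b(i)} for each i. Then for every subset I ⊆ {1,...,k}, C(X ∪ {a(1),...,a(k)} \ {b(i) : i ∈ I}) = X ∪ {a(1),...,a(k)} \ {b(1),...,b(k)}. -/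
theorem stmt7 {E : Type*} [DecidableEq E] [Fintype E] (C : Finset E → Finset E)
    (hsub : ∀ Z, C Z ⊆ Z)
    (hA1 : ∀ Z Z', Z' ⊆ Z → C Z ⊆ Z' → C Z' = C Z)
    (hA2 : ∀ Z Z', Z' ⊆ Z → C Z ∩ Z' ⊆ C Z')
    (hA3 : ∀ Z Z', Z' ⊆ Z → (C Z').card ≤ (C Z).card)
    (X : Finset E) (hX : C X = X) (k : ℕ) (a b : Fin k → E)
    (ha : Function.Injective a) (hb : Function.Injective b)
    (haX : ∀ i, a i ∉ X) (hbX : ∀ i, b i ∈ X)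
    (htandem : ∀ i, C (X ∪ {a i}) = (X ∪ {a i}) \ {b i}) :
    ∀ I : Finset (Fin k),
      C ((X ∪ Finset.univ.image a) \ I.image b)
        = (X ∪ Finset.univ.image a) \ Finset.univ.image b := by
  intro I
  set A := Finset.univ.image a with hA
  set B := Finset.univ.image b with hB
  have hBX : B ⊆ X := by
    intro x hx
    simp only [hB, Finset.mem_image] at hx
    obtain ⟨i, _, rfl⟩ := hx
    exact hbX i
  have hAX : Disjoint A X := by
    rw [Finset.disjoint_left]
    intro x hx
    simp only [hA, Finset.mem_image] at hx
    obtain ⟨i, _, rfl⟩ := hx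
    exact haX i
  have hcardA : A.card = k := by
    rw [hA, Finset.card_image_of_injective _ ha, Finset.card_univ, Fintype.card_fin]
  have hcardB : B.card = k := by
    rw [hB, Finset.card_image_of_injective _ hb, Finset.card_univ, Fintype.card_fin]
  set Z := X ∪ A with hZ
  have hXZ : X ⊆ Z := Finset.subset_union_left
  have hBZ : B ⊆ Z := hBX.trans hXZ
  have hCZsub : C Z ⊆ Z \ B := by
    intro x hx
    rw [Finset.mem_sdiff]
    refine ⟨hsub _ hx, ?_⟩
    intro hxB
    simp only [hB, Finset.mem_image] at hxB
    obtain ⟨i, _, rfl⟩ := hxB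
    have h1 : b i ∈ C Z ∩ (X ∪ {a i}) := by
      rw [Finset.mem_inter]
      exact ⟨hx, Finset.mem_union_left _ (hbX i)⟩
    have hsub' : X ∪ {a i} ⊆ Z := by
      apply Finset.union_subset_union_right
      intro y hy
      rw [Finset.mem_singleton] at hy
      subst hy
      exact Finset.mem_image_of_mem a (Finset.mem_univ i)
    have h2 := hA2 Z (X ∪ {a i}) hsub' h1
    rw [htandem i, Finset.mem_sdiff] at h2
    exact h2.2 (Finset.mem_singleton_self _)
  have hcardZ : (Z \ B).card = X.card := by
    rw [Finset.card_sdiff_of_subset hBZ, hZ, Finset.card_union_of_disjoint hAX.symm, hcardA, hcardB]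
    omega
  have hcard : (Z \ B).card ≤ (C Z).card := by
    rw [hcardZ]
    calc X.card = (C X).card := by rw [hX]
    _ ≤ (C Z).card := hA3 Z X hXZ
  have hCZ : C Z = Z \ B := Finset.eq_of_subset_of_card_le hCZsub hcard
  have hIB : I.image b ⊆ B := by
    intro x hx
    simp only [Finset.mem_image] at hx
    obtain ⟨i, _, rfl⟩ := hx
    exact Finset.mem_image_of_mem b (Finset.mem_univ i)
  have hW : Z \ I.image b ⊆ Z := Finset.sdiff_subset
  have hCZW : C Z ⊆ Z \ I.image b := by
    rw [hCZ]; exact Finset.sdiff_subset_sdiff le_rfl hIB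
  rw [hA1 Z (Z \ I.image b) hW hCZW, hCZ]
end

section
/- Under the hypotheses of the tandem lemma (distinct tandems (a(1),b(1)),...,(a(k),b(k)) for an acceptable set X), the set Z := X ∪ {a(1),...,a(k)} \ {b(1),...,b(k)} is acceptable (C(Z) = Z) and satisfies Z ≻ X, i.e., C(Z ∪ X) = Z. -/
theorem stmt8 {E : Type*} [DecidableEq E] [Fintype E] (C : Finset E → Finset E)
    (hsub : ∀ Z, C Z ⊆ Z)
    (hA1 : ∀ Z Z', Z' ⊆ Z → C Z ⊆ Z' → C Z' = C Z)
    (hA2 : ∀ Z Z', Z' ⊆ Z → C Z ∩ Z' ⊆ C Z')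
    (hA3 : ∀ Z Z', Z' ⊆ Z → (C Z').card ≤ (C Z).card)
    (X : Finset E) (hX : C X = X) (k : ℕ) (a b : Fin k → E)
    (ha : Function.Injective a) (hb : Function.Injective b)
    (haX : ∀ i, a i ∉ X) (hbX : ∀ i, b i ∈ X)
    (htandem : ∀ i, C (X ∪ {a i}) = (X ∪ {a i}) \ {b i}) :
    C ((X ∪ Finset.univ.image a) \ Finset.univ.image b)
        = (X ∪ Finset.univ.image a) \ Finset.univ.image b ∧
    C (((X ∪ Finset.univ.image a) \ Finset.univ.image b) ∪ X)
        = (X ∪ Finset.univ.image a) \ Finset.univ.image b := by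
  set A := Finset.univ.image a with hAdef
  set B := Finset.univ.image b with hBdef
  have hXA : X ⊆ X ∪ A := Finset.subset_union_left
  have hBX : B ⊆ X := by
    intro x hx
    rw [hBdef, Finset.mem_image] at hx
    obtain ⟨i, -, rfl⟩ := hx
    exact hbX i
  have hBY : B ⊆ X ∪ A := hBX.trans hXA
  have hnotB : ∀ i, b i ∉ C (X ∪ A) := by
    intro i hbi
    have hsubi : X ∪ {a i} ⊆ X ∪ A := by
      apply Finset.union_subset_union_right
      intro x hx
      rw [Finset.mem_singleton] at hx
      subst hx
      rw [hAdef, Finset.mem_image]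
      exact ⟨i, Finset.mem_univ i, rfl⟩
    have hmem : b i ∈ C (X ∪ {a i}) :=
      hA2 (X ∪ A) (X ∪ {a i}) hsubi
        (Finset.mem_inter.mpr ⟨hbi, Finset.mem_union_left _ (hbX i)⟩)
    rw [htandem i, Finset.mem_sdiff] at hmem
    exact hmem.2 (Finset.mem_singleton_self _)
  have hCsub : C (X ∪ A) ⊆ (X ∪ A) \ B := by
    intro x hx
    rw [Finset.mem_sdiff]
    refine ⟨hsub _ hx, ?_⟩
    intro hxB
    rw [hBdef, Finset.mem_image] at hxB
    obtain ⟨i, -, rfl⟩ := hxB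
    exact hnotB i hx
  have hcardA : A.card = k := by
    rw [hAdef, Finset.card_image_of_injective _ ha, Finset.card_univ, Fintype.card_fin]
  have hcardB : B.card = k := by
    rw [hBdef, Finset.card_image_of_injective _ hb, Finset.card_univ, Fintype.card_fin]
  have hdisj : Disjoint X A := by
    rw [Finset.disjoint_right]
    intro x hx
    rw [hAdef, Finset.mem_image] at hx
    obtain ⟨i, -, rfl⟩ := hx
    exact haX i
  have hcard1 : ((X ∪ A) \ B).card = X.card := by
    rw [Finset.card_sdiff_of_subset hBY, Finset.card_union_of_disjoint hdisj, hcardA, hcardB]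
    omega
  have hcard2 : X.card ≤ (C (X ∪ A)).card := by
    have := hA3 (X ∪ A) X hXA
    rwa [hX] at this
  have key : C (X ∪ A) = (X ∪ A) \ B :=
    Finset.eq_of_subset_of_card_le hCsub (by rw [hcard1]; exact hcard2)
  have hunion : ((X ∪ A) \ B) ∪ X = X ∪ A := by
    ext x
    simp only [Finset.mem_union, Finset.mem_sdiff]
    constructor
    · rintro (⟨h, -⟩ | h)
      · exact h
      · exact Or.inl h
    · rintro (h | h)
      · exact Or.inr h
      · exact Or.inl ⟨Or.inr h, fun hB => Finset.disjoint_left.mp hdisj (hBX hB) h⟩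
  have h1 : C ((X ∪ A) \ B) = (X ∪ A) \ B := by
    rw [hA1 (X ∪ A) ((X ∪ A) \ B) Finset.sdiff_subset (key ▸ Finset.Subset.refl _), key]
  exact ⟨h1, by rw [hunion, key]⟩
end

section
/- Let C satisfy consistency, substitutability, and cardinal monotonicity, let X, Y be acceptable sets with C(Y ∪ X) = Y (i.e., Y ⪰ X), and let e ∈ Y \ X. Then e ∈ C(X ∪ {e}), i.e., e is interesting under X. -/
theorem stmt9 {E : Type*} [DecidableEq E] [Fintype E] (C : Finset E → Finset E)
    (hsub : ∀ Z, C Z ⊆ Z)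
    (hA1 : ∀ Z Z', Z' ⊆ Z → C Z ⊆ Z' → C Z' = C Z)
    (hA2 : ∀ Z Z', Z' ⊆ Z → C Z ∩ Z' ⊆ C Z')
    (hA3 : ∀ Z Z', Z' ⊆ Z → (C Z').card ≤ (C Z).card)
    (X Y : Finset E) (hX : C X = X) (hY : C Y = Y)
    (hYX : C (Y ∪ X) = Y) (e : E) (he : e ∈ Y \ X) :
    e ∈ C (X ∪ {e}) := by
  have heY : e ∈ Y := (Finset.mem_sdiff.mp he).1
  have hss : X ∪ {e} ⊆ Y ∪ X := by
    intro x hx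
    rcases Finset.mem_union.mp hx with h | h
    · exact Finset.mem_union_right _ h
    · exact Finset.mem_union_left _ (Finset.mem_singleton.mp h ▸ heY)
  exact hA2 (Y ∪ X) (X ∪ {e}) hss
    (Finset.mem_inter.mpr ⟨hYX.symm ▸ heY, Finset.mem_union_right _ (Finset.mem_singleton_self e)⟩)
end

section
/- Let C satisfy consistency, substitutability, and cardinal monotonicity, let X be acceptable, and let e ∉ X with C(X ∪ {e}) = X (e is not interesting under X). Then for any acceptable X' with C(X' ∪ X) = X' (i.e., X' ⪰ X), we have C(X' ∪ X ∪ {e}) = X'. -/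
theorem stmt10 {E : Type*} [DecidableEq E] [Fintype E] (C : Finset E → Finset E)
    (hsub : ∀ Z, C Z ⊆ Z)
    (hA1 : ∀ Z Z', Z' ⊆ Z → C Z ⊆ Z' → C Z' = C Z)
    (hA2 : ∀ Z Z', Z' ⊆ Z → C Z ∩ Z' ⊆ C Z')
    (hA3 : ∀ Z Z', Z' ⊆ Z → (C Z').card ≤ (C Z).card)
    (X : Finset E) (hX : C X = X) (e : E) (he : e ∉ X)
    (hnotint : C (X ∪ {e}) = X)
    (X' : Finset E) (hX' : C X' = X') (hXX' : C (X' ∪ X) = X') :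
    C (X' ∪ X ∪ {e}) = X' := by
  have pi : ∀ A B : Finset E, C (C A ∪ B) = C (A ∪ B) := by
    intro A B
    apply hA1
    · exact Finset.union_subset_union_left (hsub A)
    · intro x hx
      rcases Finset.mem_union.mp (hsub _ hx) with h | h
      · exact Finset.mem_union_left _ (hA2 (A ∪ B) A Finset.subset_union_left
          (Finset.mem_inter.mpr ⟨hx, h⟩))
      · exact Finset.mem_union_right _ h
  have hrw : X' ∪ X ∪ {e} = (X ∪ {e}) ∪ X' := by
    ext x; simp [Finset.mem_union]; tauto
  rw [hrw, ← pi, hnotint, Finset.union_comm, hXX']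
end

section
/- Let H = (V, E) be a finite directed graph and ζ : V → ℝ a weight function, and form the flow network Ĥ by adding a source s with arcs (s,v) of capacity ζ(v) for each v with ζ(v) > 0, a sink t with arcs (u,t) of capacity |ζ(u)| for each u with ζ(u) < 0, and giving all arcs of H infinite capacity. Then for any s–t cut δ(A) (A ∋ s, A ∌ t) of finite capacity, the set X := V \ A is closed (no arc of H goes from V \ X to X), and the cut capacity equals ζ(X) − ζ(V⁻), where V⁻ = {u : ζ(u) < 0}. Consequently, minimum-capacity s–t cuts correspond exactly to minimum-weight closed sets of H. -/
open scoped Classical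

/-- Picard's reduction: for a finite-capacity s–t cut determined by `B = A ∩ V`
(the source side among the original vertices), the complement `X = V \ B` is closed,
the cut capacity equals `ζ(X) - ζ(V⁻)`, and hence minimum cuts correspond to
minimum-weight closed sets. -/
theorem stmt13 {V : Type*} [Fintype V] [DecidableEq V]
    (edges : Finset (V × V)) (ζ : V → ℝ)
    (capacity : Finset V → ℝ)
    (hcap : ∀ B : Finset V, capacity B =
      (∑ v ∈ Finset.univ.filter (fun v => 0 < ζ v ∧ v ∉ B), ζ v) +
      (∑ u ∈ B.filter (fun u => ζ u < 0), |ζ u|))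
    (B : Finset V)
    (hfin : ∀ e ∈ edges, e.1 ∈ B → e.2 ∈ B) :
    ((∀ e ∈ edges, e.2 ∈ Bᶜ → e.1 ∈ Bᶜ) ∧
     capacity B = (∑ v ∈ Bᶜ, ζ v) - (∑ u ∈ Finset.univ.filter (fun u => ζ u < 0), ζ u)) ∧
    ((∀ B' : Finset V, (∀ e ∈ edges, e.1 ∈ B' → e.2 ∈ B') → capacity B ≤ capacity B') ↔
     (∀ X : Finset V, (∀ e ∈ edges, e.2 ∈ X → e.1 ∈ X) →
        (∑ v ∈ Bᶜ, ζ v) ≤ (∑ v ∈ X, ζ v))) := by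
  have key : ∀ B' : Finset V, capacity B' =
      (∑ v ∈ B'ᶜ, ζ v) - (∑ u ∈ Finset.univ.filter (fun u => ζ u < 0), ζ u) := by
    intro B'
    rw [hcap]
    have h1 : (∑ v ∈ B'ᶜ, ζ v) =
        (∑ v ∈ B'ᶜ.filter (fun v => 0 < ζ v), ζ v) +
        (∑ v ∈ B'ᶜ.filter (fun v => ¬ 0 < ζ v), ζ v) :=
      (Finset.sum_filter_add_sum_filter_not _ _ _).symm
    have h2 : (∑ u ∈ Finset.univ.filter (fun u => ζ u < 0), ζ u) =
        (∑ u ∈ (Finset.univ.filter (fun u => ζ u < 0)).filter (fun u => u ∈ B'), ζ u) +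
        (∑ u ∈ (Finset.univ.filter (fun u => ζ u < 0)).filter (fun u => u ∉ B'), ζ u) :=
      (Finset.sum_filter_add_sum_filter_not _ _ _).symm
    have e1 : B'ᶜ.filter (fun v => 0 < ζ v) =
        Finset.univ.filter (fun v => 0 < ζ v ∧ v ∉ B') := by
      ext x; simp [Finset.mem_filter, Finset.mem_compl, and_comm]
    have e2 : (Finset.univ.filter (fun u => ζ u < 0)).filter (fun u => u ∈ B') =
        B'.filter (fun u => ζ u < 0) := by
      ext x; simp [Finset.mem_filter, and_comm]
    have e3 : (Finset.univ.filter (fun u => ζ u < 0)).filter (fun u => u ∉ B') =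
        B'ᶜ.filter (fun u => ζ u < 0) := by
      ext x; simp [Finset.mem_filter, Finset.mem_compl, and_comm]
    have e4 : (∑ v ∈ B'ᶜ.filter (fun v => ¬ 0 < ζ v), ζ v) =
        (∑ v ∈ B'ᶜ.filter (fun v => ζ v < 0), ζ v) := by
      refine (Finset.sum_subset ?_ ?_).symm
      · intro x hx
        simp only [Finset.mem_filter] at hx ⊢
        exact ⟨hx.1, not_lt.mpr hx.2.le⟩
      · intro x hx hnx
        simp only [Finset.mem_filter] at hx hnx
        have : ¬ ζ x < 0 := fun h => hnx ⟨hx.1, h⟩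
        linarith [hx.2, this]
    have e5 : (∑ u ∈ B'.filter (fun u => ζ u < 0), |ζ u|) =
        - (∑ u ∈ B'.filter (fun u => ζ u < 0), ζ u) := by
      rw [← Finset.sum_neg_distrib]
      refine Finset.sum_congr rfl fun x hx => ?_
      simp only [Finset.mem_filter] at hx
      exact abs_of_neg hx.2
    rw [h1, h2, e1, e2, e3, e4, e5]
    ring
  refine ⟨⟨?_, key B⟩, ?_⟩
  · intro e he h2
    simp only [Finset.mem_compl] at h2 ⊢
    exact fun h1 => h2 (hfin e he h1)
  · constructor
    · intro h X hX
      have := h Xᶜ (fun e he h1 => by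
        simp only [Finset.mem_compl] at h1 ⊢
        exact fun h2 => h1 (hX e he h2))
      rw [key B, key Xᶜ, compl_compl] at this
      linarith
    · intro h B' hB'
      have := h B'ᶜ (fun e he h2 => by
        simp only [Finset.mem_compl] at h2 ⊢
        by_contra h1
        exact h2 (hB' e he h1))
      rw [key B, key B']
      linarith
end

section
/- Let C be a choice function satisfying consistency, substitutability, and cardinal monotonicity, let X and Y be acceptable sets with C(Y ∪ X) = Y, and let a ∉ X with C(X ∪ {a}) = (X ∪ {a}) \ {b} for some b ∈ X. If a ∉ Y and C(Y ∪ {a}) = Y, then b ∉ Y. -/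
section ChoiceFunction

variable {E : Type*} [DecidableEq E] {C : Finset E → Finset E}

theorem notMem_choice_of_subset_of_notMem_choice (hA2 : ∀ Z Z', Z' ⊆ Z → C Z ∩ Z' ⊆ C Z')
    {Z Z' : Finset E} (hZ : Z' ⊆ Z) {x : E} (hx : x ∈ Z') (hxC : x ∉ C Z') : x ∉ C Z :=
  fun hxZ => hxC (hA2 Z Z' hZ (Finset.mem_inter.mpr ⟨hxZ, hx⟩))

theorem choice_union_singleton_of_notMem (hsub : ∀ Z, C Z ⊆ Z)
    (hA1 : ∀ Z Z', Z' ⊆ Z → C Z ⊆ Z' → C Z' = C Z) {Z : Finset E} {a : E}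
    (ha : a ∉ C (Z ∪ {a})) : C (Z ∪ {a}) = C Z := by
  refine (hA1 _ _ Finset.subset_union_left fun x hx => ?_).symm
  rcases Finset.mem_union.mp (hsub _ hx) with hxZ | hxa
  · exact hxZ
  · rw [Finset.mem_singleton.mp hxa] at hx
    exact absurd hx ha

end ChoiceFunction

theorem stmt16_general {E : Type*} [DecidableEq E] (C : Finset E → Finset E)
    (hsub : ∀ Z, C Z ⊆ Z)
    (hA1 : ∀ Z Z', Z' ⊆ Z → C Z ⊆ Z' → C Z' = C Z)
    (hA2 : ∀ Z Z', Z' ⊆ Z → C Z ∩ Z' ⊆ C Z')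
    (X Y : Finset E) (hYX : C (Y ∪ X) = Y)
    (a : E) (b : E) (hbX : b ∈ X)
    (htan : C (X ∪ {a}) = (X ∪ {a}) \ {b})
    (haY : a ∉ Y) (hYa : C (Y ∪ {a}) = Y) :
    b ∉ Y := by
  intro hbY
  have haW : a ∉ C (Y ∪ X ∪ {a}) :=
    notMem_choice_of_subset_of_notMem_choice hA2
      (Finset.union_subset_union Finset.subset_union_left subset_rfl) (by simp) (by rwa [hYa])
  have hW : C (Y ∪ X ∪ {a}) = Y := (choice_union_singleton_of_notMem hsub hA1 haW).trans hYX
  have hbC : b ∉ C (X ∪ {a}) := by rw [htan]; simp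
  exact notMem_choice_of_subset_of_notMem_choice hA2
    (Finset.union_subset_union Finset.subset_union_right subset_rfl) (by simp [hbX]) hbC
    (by rwa [hW])

theorem stmt16 {E : Type*} [DecidableEq E] [Fintype E] (C : Finset E → Finset E)
    (hsub : ∀ Z, C Z ⊆ Z)
    (hA1 : ∀ Z Z', Z' ⊆ Z → C Z ⊆ Z' → C Z' = C Z)
    (hA2 : ∀ Z Z', Z' ⊆ Z → C Z ∩ Z' ⊆ C Z')
    (hA3 : ∀ Z Z', Z' ⊆ Z → (C Z').card ≤ (C Z).card)
    (X Y : Finset E) (hX : C X = X) (hY : C Y = Y) (hYX : C (Y ∪ X) = Y)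
    (a : E) (haX : a ∉ X) (b : E) (hbX : b ∈ X)
    (htan : C (X ∪ {a}) = (X ∪ {a}) \ {b})
    (haY : a ∉ Y) (hYa : C (Y ∪ {a}) = Y) :
    b ∉ Y :=
  stmt16_general C hsub hA1 hA2 X Y hYX a b hbX htan haY hYa
end

section
/- Let C be a path-independent choice function and X, Y, Z acceptable sets. If C(X ∪ Y) = X and C(Y ∪ Z) = Y, then C(X ∪ Z) = X; that is, the relation ⪰ defined by Y ⪰ Z iff C(Y ∪ Z) = Y is a partial order on acceptable sets (reflexive, antisymmetric, transitive). -/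
theorem stmt18 {E : Type*} [DecidableEq E] [Fintype E] (C : Finset E → Finset E)
    (hsub : ∀ Z, C Z ⊆ Z)
    (hPI : ∀ Z Z', C (Z ∪ Z') = C (C Z ∪ Z')) :
    (∀ X : Finset E, C X = X → C (X ∪ X) = X) ∧
    (∀ X Y : Finset E, C X = X → C Y = Y →
      C (X ∪ Y) = X → C (Y ∪ X) = Y → X = Y) ∧
    (∀ X Y Z : Finset E, C X = X → C Y = Y → C Z = Z →
      C (X ∪ Y) = X → C (Y ∪ Z) = Y → C (X ∪ Z) = X) := by
  refine ⟨fun X hX => by rw [Finset.union_self, hX],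
    fun X Y hX hY h1 h2 => by rw [Finset.union_comm] at h1; exact h1.symm.trans h2,
    fun X Y Z hX hY hZ h1 h2 => ?_⟩
  have key : C (X ∪ Z) = C ((X ∪ Y) ∪ Z) := by
    rw [hPI (X ∪ Y) Z, h1]
  have key2 : C ((X ∪ Y) ∪ Z) = C (X ∪ Y) := by
    rw [Finset.union_assoc, Finset.union_comm X (Y ∪ Z), hPI (Y ∪ Z) X, h2,
      Finset.union_comm Y X]
  rw [key, key2, h1]
end

section
/- Let C satisfy consistency, substitutability, and cardinal monotonicity, and let X, Y be acceptable sets. Then C(X ∪ Y) is acceptable, and C(X ∪ Y) ⪰ X and C(X ∪ Y) ⪰ Y (where Z ⪰ Z' means C(Z ∪ Z') = Z); i.e., C(X ∪ Y) is an upper bound of X and Y in the preference order. -/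
theorem stmt19 {E : Type*} [DecidableEq E] [Fintype E] (C : Finset E → Finset E)
    (hsub : ∀ Z, C Z ⊆ Z)
    (hA1 : ∀ Z Z', Z' ⊆ Z → C Z ⊆ Z' → C Z' = C Z)
    (hA2 : ∀ Z Z', Z' ⊆ Z → C Z ∩ Z' ⊆ C Z')
    (hA3 : ∀ Z Z', Z' ⊆ Z → (C Z').card ≤ (C Z).card)
    (X Y : Finset E) (hX : C X = X) (hY : C Y = Y) :
    C (C (X ∪ Y)) = C (X ∪ Y) ∧
    C (C (X ∪ Y) ∪ X) = C (X ∪ Y) ∧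
    C (C (X ∪ Y) ∪ Y) = C (X ∪ Y) := by
  refine ⟨hA1 _ _ (hsub _) subset_rfl, ?_, ?_⟩
  · exact hA1 (X ∪ Y) _ (Finset.union_subset (hsub _) Finset.subset_union_left)
      Finset.subset_union_left
  · exact hA1 (X ∪ Y) _ (Finset.union_subset (hsub _) Finset.subset_union_right)
      Finset.subset_union_left
end
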